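/- Let G be a directed graph on the vertex set {1,…,N} with neighbor sets N_κ, let N_max := max_κ |N_κ| ≥ 1, and for each vertex κ let f_κ : ℝⁿ × (ℝⁿ)^{N_κ} → ℝⁿ satisfy: |f_κ(x, b)| ≤ M for all arguments, |f_κ(x, b) − f_κ(x, b')| ≤ L₁ |b − b'|, and |f_κ(x, b) − f_κ(x', b)| ≤ L₂ |x − x'|, with constants M, L₁, L₂ > 0. Fix m ≥ 1, assign to each vertex κ an initial point x_{κ,G} ∈ ℝⁿ, fix a vertex i and a neighbor ℓ ∈ N_i, and assume the initial points used for i and for ℓ agree on N̄_i^m ∩ N̄_ℓ^m (consistent cell configurations). Let (χ_κ^{[i]}) and (χ_κ^{[ℓ]}) denote the reference solutions associated with i and ℓ respectively (per Definition of reference trajectories: if N_i^{m+1} = ∅ these solve χ̇_κ = f_κ(χ_κ, (χ_j)_{j∈N_κ}) for κ ∈ N̄_i^m with χ_κ(0) = x_{κ,G}; if N_i^{m+1} ≠ ∅ they solve this system only for κ ∈ N̄_i^{m−1}, with χ_κ(t) := x_{κ,G} held constant for κ ∈ N_i^m; and analogously for ℓ). Let t* be the unique positive solution of e^{L₂ t}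 − (L₂ + L₂²/(L₁ √N_max)) t − 1 = 0, and define H₁(t) := M t and H_{κ+1}(t) := ∫_0^t e^{L₂(t−s)} L₁ √N_max H_κ(s) ds for κ ≥ 1. Then |χ_ℓ^{[i]}(t) − χ_ℓ^{[ℓ]}(t)| ≤ H_m(t) for all t ∈ [0, t*]. -/

import Mathlib

/-- `hasPath E m j i` : there is a directed path of length `m` from `j` to `i`. -/
def hasPath {V : Type*} (E : V → V → Prop) : ℕ → V → V → Prop
  | 0, j, i => j = i
  | (n + 1), j, i => ∃ k, E j k ∧ hasPath E n k i

/-- The neighbor set `N_i` of `i` : vertices `j ≠ i` with an edge `(j, i)`. -/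
def nbr {V : Type*} (E : V → V → Prop) (i : V) : Set V := {j | j ≠ i ∧ E j i}

/-- `nset E i m` = `N_i^m` : for `m ≥ 1`, the vertices `j ≠ i` from which `i` is
reachable by a path of length `m` but by no shorter path; `N_i^0 = {i}`. -/
def nset {V : Type*} (E : V → V → Prop) (i : V) : ℕ → Set V
  | 0 => {i}
  | (m + 1) => {j | j ≠ i ∧ hasPath E (m + 1) j i ∧ ∀ k < m + 1, ¬ hasPath E k j i}

/-- The `m`-neighbor set `N̄_i^m = ⋃_{k ≤ m} N_i^k` of `i`. -/
def nbar {V : Type*} (E : V → V → Prop) (i : V) (m : ℕ) : Set V :=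
  ⋃ k ∈ Set.Iic m, nset E i k

/-- The neighbors of `κ` as a finset. -/
def nbrFinset {Nv : ℕ} (E : Fin Nv → Fin Nv → Prop) [DecidableRel E] (κ : Fin Nv) :
    Finset (Fin Nv) :=
  Finset.univ.filter fun j => j ≠ κ ∧ E j κ

/-!
Where both reference systems integrate the dynamics (on `Ai ∩ Al`), the deviation of an agent
obeys a Gronwall inequality whose forcing is `L₁ √N_max` times the largest deviation of its
neighbors, so a bound `H_r` on the neighbors yields `H_{r+1}` for the agent; an agent frozen by
one system moves by at most `M t = H₁ t` in the other. The choice of `t*` makes `H₂ ≤ H₁`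
(the chord inequality for `exp`), hence `H_{r+1} ≤ H_r`, on `[0, t*]`. The index
`max 2 (m - dist(κ, ℓ))` then drops by at most one along each edge, and a first-crossing
argument with a margin `ε e^{(L₂ + L₁ √N_max) t}` makes all these coupled bounds hold at once;
at `ℓ` the index is at least `m`.
-/

open Set

section Neighborhoods

variable {V : Type*} {E : V → V → Prop}

lemma hasPath_succ_of_hasPath {p : ℕ} {j k i : V} (h : hasPath E p j k) (e : E k i) :
    hasPath E (p + 1) j i := by
  induction p generalizing j with
  | zero => cases h; exact ⟨i, e, rfl⟩
  | succ p ih => obtain ⟨k', hjk', hk'⟩ := h; exact ⟨k', hjk', ih hk'⟩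

lemma mem_nbar_iff {i j : V} {k : ℕ} : j ∈ nbar E i k ↔ ∃ p ≤ k, hasPath E p j i := by
  classical
  simp only [nbar, mem_iUnion, mem_Iic, exists_prop]
  constructor
  · rintro ⟨_ | p, hpk, hp⟩
    exacts [⟨0, hpk, hp⟩, ⟨p + 1, hpk, hp.2.1⟩]
  · rintro ⟨p, hpk, hp⟩
    have hex : ∃ q, hasPath E q j i := ⟨p, hp⟩
    refine ⟨Nat.find hex, (Nat.find_min' hex hp).trans hpk, ?_⟩
    -- a shortest path witnesses membership in the right sphere
    match hq : Nat.find hex, Nat.find_spec hex with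
    | 0, h => exact h
    | q + 1, h =>
      refine ⟨fun hji => ?_, h, fun k' hk' => Nat.find_min hex (by omega)⟩
      have := Nat.find_min' hex (show hasPath E 0 j i from hji)
      omega

lemma nbar_mono (i : V) : Monotone (nbar E i) := fun _ _ hkk' _ hj =>
  let ⟨p, hp, hpath⟩ := mem_nbar_iff.1 hj
  mem_nbar_iff.2 ⟨p, hp.trans hkk', hpath⟩

lemma self_mem_nbar (i : V) (k : ℕ) : i ∈ nbar E i k :=
  mem_nbar_iff.2 ⟨0, k.zero_le, rfl⟩

lemma mem_nbar_succ_of_adj {j κ i : V} {k : ℕ} (e : E j κ) (h : κ ∈ nbar E i k) :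
    j ∈ nbar E i (k + 1) :=
  let ⟨p, hp, hpath⟩ := mem_nbar_iff.1 h
  mem_nbar_iff.2 ⟨p + 1, by omega, κ, e, hpath⟩

lemma mem_nbar_succ_of_adj_center {j ℓ i : V} {k : ℕ} (e : E ℓ i) (h : j ∈ nbar E ℓ k) :
    j ∈ nbar E i (k + 1) :=
  let ⟨p, hp, hpath⟩ := mem_nbar_iff.1 h
  mem_nbar_iff.2 ⟨p + 1, by omega, hasPath_succ_of_hasPath hpath e⟩

lemma nbar_succ (i : V) (k : ℕ) : nbar E i (k + 1) = nbar E i k ∪ nset E i (k + 1) := by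
  ext j
  simp only [nbar, mem_iUnion, mem_Iic, mem_union, exists_prop, Nat.le_succ_iff]
  constructor
  · rintro ⟨p, hp | rfl, hj⟩
    exacts [Or.inl ⟨p, hp, hj⟩, Or.inr hj]
  · rintro (⟨p, hp, hj⟩ | hj)
    exacts [⟨p, Or.inl hp, hj⟩, ⟨k + 1, Or.inr rfl, hj⟩]

end Neighborhoods

section ReferenceSolution

variable {V F : Type*} [NormedAddCommGroup F] [NormedSpace ℝ F] {E : V → V → Prop}
  {f : V → F → (V → F) → F} {D A : Set V} {x : V → F} {χ : V → ℝ → F}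

/-- In the paper's reference trajectories `D = N̄_i^m` and `A` is `N̄_i^m` or `N̄_i^{m-1}`
according as `N_i^{m+1}` is empty or not. -/
structure IsReferenceSolution (E : V → V → Prop) (f : V → F → (V → F) → F) (D A : Set V)
    (x : V → F) (χ : V → ℝ → F) : Prop where
  subset : A ⊆ D
  mem_of_adj : ∀ κ ∈ A, ∀ j, j ≠ κ → E j κ → j ∈ D
  apply_zero_of_mem : ∀ κ ∈ A, χ κ 0 = x κ
  hasDerivWithinAt : ∀ κ ∈ A, ∀ t ∈ Ici (0 : ℝ),
    HasDerivWithinAt (χ κ) (f κ (χ κ t) fun j => χ j t) (Ici 0) t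
  eq_of_notMem : ∀ κ ∈ D \ A, ∀ t, χ κ t = x κ

namespace IsReferenceSolution

variable (hχ : IsReferenceSolution E f D A x χ)
include hχ

lemma apply_zero {κ : V} (hκ : κ ∈ D) : χ κ 0 = x κ := by
  by_cases hA : κ ∈ A
  exacts [hχ.apply_zero_of_mem κ hA, hχ.eq_of_notMem κ ⟨hκ, hA⟩ 0]

lemma continuousOn {κ : V} (hκ : κ ∈ D) : ContinuousOn (χ κ) (Ici 0) := by
  by_cases hA : κ ∈ A
  · exact fun t ht => (hχ.hasDerivWithinAt κ hA t ht).continuousWithinAt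
  · exact continuousOn_const.congr fun t _ => hχ.eq_of_notMem κ ⟨hκ, hA⟩ t

lemma norm_sub_le {M : ℝ} (hbound : ∀ κ y b, ‖f κ y b‖ ≤ M) {κ : V} (hκ : κ ∈ D)
    {t : ℝ} (ht : 0 ≤ t) : ‖χ κ t - x κ‖ ≤ M * t := by
  have hM : 0 ≤ M := (norm_nonneg _).trans (hbound κ (x κ) x)
  by_cases hA : κ ∈ A
  · rw [← hχ.apply_zero_of_mem κ hA]
    simpa using norm_image_sub_le_of_norm_deriv_right_le_segment
      (fun s hs => (hχ.hasDerivWithinAt κ hA s hs.1).continuousWithinAt.mono Icc_subset_Ici_self)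
      (fun s hs => (hχ.hasDerivWithinAt κ hA s hs.1).mono (Ici_subset_Ici.2 hs.1))
      (fun s _ => hbound κ _ _) t ⟨ht, le_rfl⟩
  · rw [hχ.eq_of_notMem κ ⟨hκ, hA⟩ t, sub_self, norm_zero]
    positivity

end IsReferenceSolution

lemma norm_sub_le_of_notMem_inter {M : ℝ} {Di Ai Dl Al : Set V} {xi xl : V → F}
    {χi χl : V → ℝ → F} (hbound : ∀ κ y b, ‖f κ y b‖ ≤ M)
    (hRi : IsReferenceSolution E f Di Ai xi χi) (hRl : IsReferenceSolution E f Dl Al xl χl)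
    (hagree : ∀ κ ∈ Di ∩ Dl, xi κ = xl κ) {κ : V} (hκ : κ ∈ Di ∩ Dl)
    (hκA : κ ∉ Ai ∩ Al) {t : ℝ} (ht : 0 ≤ t) : ‖χi κ t - χl κ t‖ ≤ M * t := by
  by_cases hi : κ ∈ Ai
  · rw [hRl.eq_of_notMem κ ⟨hκ.2, fun hl => hκA ⟨hi, hl⟩⟩ t, ← hagree κ hκ]
    exact hRi.norm_sub_le hbound hκ.1 ht
  · rw [hRi.eq_of_notMem κ ⟨hκ.1, hi⟩ t, hagree κ hκ, norm_sub_rev]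
    exact hRl.norm_sub_le hbound hκ.2 ht

lemma exists_isReferenceSolution {m : ℕ} (hm : 1 ≤ m) {i : V} {x : V → F} {χ : V → ℝ → F}
    (h : (nset E i (m + 1) = ∅ →
        (∀ κ ∈ nbar E i m, χ κ 0 = x κ) ∧
        (∀ κ ∈ nbar E i m, ∀ t ∈ Ici (0 : ℝ),
          HasDerivWithinAt (χ κ) (f κ (χ κ t) (fun j => χ j t)) (Ici 0) t)) ∧
      (nset E i (m + 1) ≠ ∅ →
        (∀ κ ∈ nbar E i (m - 1), χ κ 0 = x κ) ∧
        (∀ κ ∈ nbar E i (m - 1), ∀ t ∈ Ici (0 : ℝ),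
          HasDerivWithinAt (χ κ) (f κ (χ κ t) (fun j => χ j t)) (Ici 0) t) ∧
        (∀ κ ∈ nset E i m, ∀ t : ℝ, χ κ t = x κ))) :
    ∃ A, nbar E i (m - 1) ⊆ A ∧ IsReferenceSolution E f (nbar E i m) A x χ := by
  obtain ⟨m, rfl⟩ : ∃ k, m = k + 1 := ⟨m - 1, by omega⟩
  rw [Nat.add_sub_cancel]
  by_cases hempty : nset E i (m + 1 + 1) = ∅
  · obtain ⟨hinit, hode⟩ := h.1 hempty
    refine ⟨nbar E i (m + 1), nbar_mono i m.le_succ, subset_rfl, fun κ hκ j _ e => ?_,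
      hinit, hode, fun κ hκ => absurd hκ.1 hκ.2⟩
    simpa [nbar_succ, hempty] using mem_nbar_succ_of_adj e hκ
  · obtain ⟨hinit, hode, hfrozen⟩ := h.2 hempty
    refine ⟨nbar E i m, subset_rfl, nbar_mono i m.le_succ, fun κ hκ j _ e =>
      mem_nbar_succ_of_adj e hκ, hinit, hode, fun κ hκ => hfrozen κ ?_⟩
    simpa [nbar_succ, hκ.2] using hκ.1

end ReferenceSolution

open Real

lemma exp_mul_le_one_add_mul_of_eq {a b T t : ℝ} (hT : 0 < T) (hroot : exp (a * T) = 1 + b * T)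
    (ht : t ∈ Icc 0 T) : exp (a * t) ≤ 1 + b * t := by
  have hw : 0 ≤ t / T := div_nonneg ht.1 hT.le
  have hw' : 0 ≤ 1 - t / T := sub_nonneg.2 ((div_le_one hT).2 ht.2)
  have key := convexOn_exp.2 (mem_univ 0) (mem_univ (a * T)) hw' hw (sub_add_cancel 1 _)
  have hpt : (1 - t / T) • (0 : ℝ) + (t / T) • (a * T) = a * t := by
    simp only [smul_eq_mul]
    field_simp
    ring
  rw [hpt, smul_eq_mul, smul_eq_mul, exp_zero, hroot] at key
  calc exp (a * t) ≤ (1 - t / T) * 1 + t / T * (1 + b * T) := key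
    _ = 1 + b * t := by field_simp; ring

/-- `H 0` is left unconstrained. -/
structure IsVolterraIterates (K C M : ℝ) (H : ℕ → ℝ → ℝ) : Prop where
  one : ∀ t, H 1 t = M * t
  succ : ∀ k, 1 ≤ k → ∀ t, H (k + 1) t = ∫ s in (0 : ℝ)..t, exp (K * (t - s)) * (C * H k s)

namespace IsVolterraIterates

variable {K C M : ℝ} {H : ℕ → ℝ → ℝ} (hH : IsVolterraIterates K C M H)
include hH

lemma continuous {k : ℕ} (hk : 1 ≤ k) : Continuous (H k) := by
  induction k, hk using Nat.le_induction with
  | base => rw [funext hH.one]; fun_prop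
  | succ k hk ih =>
    rw [funext (hH.succ k hk)]
    exact intervalIntegral.continuous_parametric_intervalIntegral_of_continuous
      (by fun_prop) continuous_id

lemma nonneg (hC : 0 ≤ C) (hM : 0 ≤ M) {k : ℕ} (hk : 1 ≤ k) {t : ℝ} (ht : 0 ≤ t) :
    0 ≤ H k t := by
  induction k, hk using Nat.le_induction generalizing t with
  | base => rw [hH.one]; positivity
  | succ k hk ih =>
    rw [hH.succ k hk]
    exact intervalIntegral.integral_nonneg ht fun s hs => by
      have := ih hs.1
      positivity

lemma two_eq (hK : K ≠ 0) (t : ℝ) : H 2 t = C * M / K ^ 2 * (exp (K * t) - 1 - K * t) := by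
  have hderiv : ∀ s ∈ uIcc 0 t,
      HasDerivAt (fun s => -(C * M) * exp (K * (t - s)) * (s / K + 1 / K ^ 2))
        (exp (K * (t - s)) * (C * (M * s))) s := by
    intro s _
    have hexp : HasDerivAt (fun s => exp (K * (t - s))) (exp (K * (t - s)) * -K) s := by
      simpa using (((hasDerivAt_id s).const_sub t).const_mul K).exp
    refine ((hexp.const_mul (-(C * M))).mul
      (((hasDerivAt_id' s).div_const K).add_const (1 / K ^ 2))).congr_deriv ?_
    field_simp
    ring
  rw [hH.succ 1 le_rfl, intervalIntegral.integral_congr fun s _ => by rw [hH.one],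
    intervalIntegral.integral_eq_sub_of_hasDerivAt hderiv
      (Continuous.intervalIntegrable (by fun_prop) _ _)]
  simp only [sub_self, mul_zero, sub_zero, exp_zero, zero_div]
  field_simp
  ring

lemma succ_le (hK : 0 < K) (hC : 0 < C) (hM : 0 ≤ M) {T : ℝ} (hT : 0 < T)
    (hroot : exp (K * T) = 1 + (K + K ^ 2 / C) * T) {k : ℕ} (hk : 1 ≤ k) :
    ∀ t ∈ Icc 0 T, H (k + 1) t ≤ H k t := by
  induction k, hk using Nat.le_induction with
  | base =>
    intro t ht
    have hexp := exp_mul_le_one_add_mul_of_eq hT hroot ht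
    rw [hH.two_eq hK.ne', hH.one]
    calc C * M / K ^ 2 * (exp (K * t) - 1 - K * t)
        ≤ C * M / K ^ 2 * (K ^ 2 / C * t) := by gcongr; linarith
      _ = M * t := by field_simp
  | succ k hk ih =>
    intro t ht
    rw [hH.succ (k + 1) (by omega), hH.succ k hk]
    refine intervalIntegral.integral_mono_on ht.1 ?_ ?_ fun s hs => ?_
    · have := hH.continuous (k := k + 1) (by omega)
      exact Continuous.intervalIntegrable (by fun_prop) _ _
    · have := hH.continuous hk
      exact Continuous.intervalIntegrable (by fun_prop) _ _
    · have := ih s ⟨hs.1, hs.2.trans ht.2⟩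
      gcongr

lemma antitoneOn (hK : 0 < K) (hC : 0 < C) (hM : 0 ≤ M) {T : ℝ} (hT : 0 < T)
    (hroot : exp (K * T) = 1 + (K + K ^ 2 / C) * T) {t : ℝ} (ht : t ∈ Icc 0 T) :
    AntitoneOn (fun k => H k t) (Ici 1) := by
  intro a ha b _ hab
  induction b, hab using Nat.le_induction with
  | base => exact le_rfl
  | succ b hab ih =>
    exact (hH.succ_le hK hC hM hT hroot (ha.trans hab) t ht).trans (ih (ha.trans hab))

end IsVolterraIterates

lemma integral_exp_mul_exp_eq (K C T : ℝ) :
    ∫ s in (0 : ℝ)..T, exp (K * (T - s)) * (C * exp ((K + C) * s)) =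
      exp ((K + C) * T) - exp (K * T) := by
  have hderiv : ∀ s ∈ uIcc 0 T, HasDerivAt (fun s => exp (K * T) * exp (C * s))
      (exp (K * (T - s)) * (C * exp ((K + C) * s))) s := by
    intro s _
    refine (((hasDerivAt_id' s).const_mul C).exp.const_mul (exp (K * T))).congr_deriv ?_
    rw [show exp (K * (T - s)) * (C * exp ((K + C) * s)) =
      C * exp (K * T + C * s) by rw [← mul_left_comm, ← exp_add]; ring_nf, exp_add]
    ring
  rw [intervalIntegral.integral_eq_sub_of_hasDerivAt hderiv
    (Continuous.intervalIntegrable (by fun_prop) _ _), mul_zero, exp_zero, mul_one, ← exp_add]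
  ring_nf

lemma norm_le_integral_of_norm_deriv_right_le {F : Type*} [NormedAddCommGroup F]
    [NormedSpace ℝ F] {g g' : ℝ → F} {φ : ℝ → ℝ} {K T : ℝ} (hT : 0 ≤ T)
    (hg : ContinuousOn g (Icc 0 T)) (hg' : ∀ t ∈ Ico 0 T, HasDerivWithinAt g (g' t) (Ici t) t)
    (h0 : g 0 = 0) (hφ : Continuous φ) (hbound : ∀ t ∈ Ico 0 T, ‖g' t‖ ≤ K * ‖g t‖ + φ t) :
    ‖g T‖ ≤ ∫ s in (0 : ℝ)..T, exp (K * (T - s)) * φ s := by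
  set I : ℝ → ℝ := fun u => ∫ s in (0 : ℝ)..u, exp (-K * s) * φ s
  have hI : ∀ u, HasDerivAt I (exp (-K * u) * φ u) u := fun u =>
    intervalIntegral.integral_hasDerivAt_right (Continuous.intervalIntegrable (by fun_prop) _ _)
      (Continuous.stronglyMeasurableAtFilter (by fun_prop) _ _) (by fun_prop)
  have hint : ∫ s in (0 : ℝ)..T, exp (K * (T - s)) * φ s = exp (K * T) * I T := by
    rw [← intervalIntegral.integral_const_mul]
    refine intervalIntegral.integral_congr fun s _ => ?_
    rw [← mul_assoc, ← exp_add]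
    ring_nf
  -- compare `‖g‖` with the solutions `B` of `B' = K B + φ + δ e^{K u}`, `B 0 = δ`
  have hδ : ∀ δ > 0, ‖g T‖ ≤ exp (K * T) * I T + δ * (exp (K * T) * (T + 1)) := by
    intro δ hδ
    set B : ℝ → ℝ := fun u => exp (K * u) * (I u + δ * (u + 1))
    have hB : ∀ u, HasDerivAt B (K * B u + φ u + δ * exp (K * u)) u := by
      intro u
      refine (((hasDerivAt_id' u).const_mul K).exp.mul ((hI u).add
        (((hasDerivAt_id' u).add_const 1).const_mul δ))).congr_deriv ?_
      have : exp (K * u) * exp (-K * u) = 1 := by rw [← exp_add]; ring_nf; exact exp_zero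
      simp only [Pi.add_apply]
      linear_combination φ u * this
    have := image_norm_le_of_norm_deriv_right_lt_deriv_boundary hg hg'
      (by simp [B, I, h0, hδ.le]) hB (fun t ht hgt => by
        have := hbound t ht
        rw [hgt] at this
        have : 0 < δ * exp (K * t) := by positivity
        linarith) (right_mem_Icc.2 hT)
    simp only [B] at this
    linarith
  refine le_of_forall_pos_le_add fun ε hε => ?_
  have hpos : 0 < exp (K * T) * (T + 1) := by positivity
  have := hδ (ε / (exp (K * T) * (T + 1))) (by positivity)
  rwa [div_mul_cancel₀ _ hpos.ne', ← hint] at this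

lemma norm_sub_le_of_forall_le {ι F : Type*} [NormedAddCommGroup F] {s : Finset ι}
    {f : F → (ι → F) → F} {L₁ L₂ W : ℝ} {N : ℕ} (hL₁ : 0 ≤ L₁)
    (hLip1 : ∀ x b b', ‖f x b - f x b'‖ ≤ L₁ * √(∑ j ∈ s, ‖b j - b' j‖ ^ 2))
    (hLip2 : ∀ x x' b, ‖f x b - f x' b‖ ≤ L₂ * ‖x - x'‖) (hcard : s.card ≤ N) (hW : 0 ≤ W)
    {x x' : F} {b b' : ι → F} (hb : ∀ j ∈ s, ‖b j - b' j‖ ≤ W) :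
    ‖f x b - f x' b'‖ ≤ L₂ * ‖x - x'‖ + L₁ * √N * W := by
  have hsum : ∑ j ∈ s, ‖b j - b' j‖ ^ 2 ≤ N * W ^ 2 :=
    calc ∑ j ∈ s, ‖b j - b' j‖ ^ 2 ≤ s.card * W ^ 2 := by
          simpa using Finset.sum_le_card_nsmul s _ _ fun j hj =>
            pow_le_pow_left₀ (norm_nonneg _) (hb j hj) 2
      _ ≤ N * W ^ 2 := by gcongr
  have hsqrt : √(∑ j ∈ s, ‖b j - b' j‖ ^ 2) ≤ √N * W := by
    rw [← sqrt_sq hW, ← sqrt_mul (Nat.cast_nonneg N)]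
    exact sqrt_le_sqrt hsum
  calc ‖f x b - f x' b'‖ ≤ ‖f x b - f x' b‖ + ‖f x' b - f x' b'‖ :=
        norm_sub_le_norm_sub_add_norm_sub _ _ _
    _ ≤ L₂ * ‖x - x'‖ + L₁ * (√N * W) := add_le_add (hLip2 _ _ _)
        ((hLip1 _ _ _).trans (mul_le_mul_of_nonneg_left hsqrt hL₁))
    _ = L₂ * ‖x - x'‖ + L₁ * √N * W := by ring

/-- Continuous induction: a family of continuous strict inequalities that cannot fail for the
first time at any `T` holds on all of `[0, a]`. -/
lemma forall_lt_of_forall_Ico_le_imp_lt {ι : Type*} [Finite ι] {u B : ι → ℝ → ℝ} {a : ℝ}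
    (hu : ∀ κ, ContinuousOn (u κ) (Icc 0 a)) (hB : ∀ κ, ContinuousOn (B κ) (Icc 0 a))
    (hstep : ∀ T ∈ Icc 0 a, (∀ s ∈ Ico 0 T, ∀ κ, u κ s ≤ B κ s) → ∀ κ, u κ T < B κ T)
    {t : ℝ} (ht : t ∈ Icc 0 a) (κ : ι) : u κ t < B κ t := by
  by_contra! h
  set S := ⋃ κ, {t ∈ Icc 0 a | B κ t ≤ u κ t}
  have hS : IsCompact S := isCompact_Icc.of_isClosed_subset
    (isClosed_iUnion_of_finite fun κ => isClosed_Icc.isClosed_le (hB κ) (hu κ))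
    (iUnion_subset fun κ => sep_subset _ _)
  obtain ⟨T, hTS, hTmin⟩ := hS.exists_isLeast ⟨t, mem_iUnion.2 ⟨κ, ht, h⟩⟩
  obtain ⟨κ₀, hT, hκ₀⟩ := mem_iUnion.1 hTS
  refine (hstep T hT (fun s hs κ' => ?_) κ₀).not_ge hκ₀
  by_contra! hlt
  exact (hTmin (mem_iUnion.2 ⟨κ', ⟨hs.1, hs.2.le.trans hT.2⟩, hlt.le⟩)).not_gt hs.2

section Comparison

variable {Nv : ℕ} {F : Type*} [NormedAddCommGroup F] [NormedSpace ℝ F]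
  {E : Fin Nv → Fin Nv → Prop} [DecidableRel E] {f : Fin Nv → F → (Fin Nv → F) → F}
  {L₁ L₂ M : ℝ} {N : ℕ} {H : ℕ → ℝ → ℝ}
  {Di Ai Dl Al : Set (Fin Nv)} {xi xl : Fin Nv → F} {χi χl : Fin Nv → ℝ → F}

lemma norm_sub_lt_of_forall_nbr_le (hL₁ : 0 ≤ L₁) (hM : 0 ≤ M)
    (hLip1 : ∀ κ x b b', ‖f κ x b - f κ x b'‖ ≤
      L₁ * √(∑ j ∈ nbrFinset E κ, ‖b j - b' j‖ ^ 2))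
    (hLip2 : ∀ κ x x' b, ‖f κ x b - f κ x' b‖ ≤ L₂ * ‖x - x'‖) {κ : Fin Nv}
    (hcard : (nbrFinset E κ).card ≤ N) (hH : IsVolterraIterates L₂ (L₁ * √N) M H)
    (hi : ∀ t ∈ Ici (0 : ℝ), HasDerivWithinAt (χi κ) (f κ (χi κ t) fun j => χi j t) (Ici 0) t)
    (hl : ∀ t ∈ Ici (0 : ℝ), HasDerivWithinAt (χl κ) (f κ (χl κ t) fun j => χl j t) (Ici 0) t)
    (h0 : χi κ 0 = χl κ 0) {r : ℕ} (hr : 1 ≤ r) {ε T : ℝ} (hε : 0 < ε) (hT : 0 ≤ T)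
    (hnbr : ∀ s ∈ Ico 0 T, ∀ j ∈ nbrFinset E κ,
      ‖χi j s - χl j s‖ ≤ H r s + ε * exp ((L₂ + L₁ * √N) * s)) :
    ‖χi κ T - χl κ T‖ < H (r + 1) T + ε * exp ((L₂ + L₁ * √N) * T) := by
  set C := L₁ * √N
  have hHr := hH.continuous hr
  have hderiv : ∀ s ∈ Ico 0 T, ‖f κ (χi κ s) (fun j => χi j s) - f κ (χl κ s) (fun j => χl j s)‖
      ≤ L₂ * ‖χi κ s - χl κ s‖ + C * (H r s + ε * exp ((L₂ + C) * s)) := by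
    intro s hs
    have := hH.nonneg (by positivity) hM hr hs.1
    exact norm_sub_le_of_forall_le hL₁ (hLip1 κ) (hLip2 κ) hcard (by positivity) (hnbr s hs)
  have hgron := norm_le_integral_of_norm_deriv_right_le hT
    (fun s hs => ((hi s hs.1).sub (hl s hs.1)).continuousWithinAt.mono Icc_subset_Ici_self)
    (fun s hs => ((hi s hs.1).sub (hl s hs.1)).mono (Ici_subset_Ici.2 hs.1))
    (sub_eq_zero.2 h0) (by fun_prop) hderiv
  have hint : ∫ s in (0 : ℝ)..T, exp (L₂ * (T - s)) * (C * (H r s + ε * exp ((L₂ + C) * s))) =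
      H (r + 1) T + ε * (exp ((L₂ + C) * T) - exp (L₂ * T)) := by
    rw [hH.succ r hr, ← integral_exp_mul_exp_eq, ← intervalIntegral.integral_const_mul,
      ← intervalIntegral.integral_add (Continuous.intervalIntegrable (by fun_prop) _ _)
        (Continuous.intervalIntegrable (by fun_prop) _ _)]
    exact intervalIntegral.integral_congr fun s _ => by ring
  have := mul_pos hε (exp_pos (L₂ * T))
  calc ‖χi κ T - χl κ T‖ ≤ _ := hint ▸ hgron
    _ < _ := by linarith

variable (hL₁ : 0 ≤ L₁) (hM : 0 ≤ M) (hbound : ∀ κ y b, ‖f κ y b‖ ≤ M)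
  (hLip1 : ∀ κ x b b', ‖f κ x b - f κ x b'‖ ≤ L₁ * √(∑ j ∈ nbrFinset E κ, ‖b j - b' j‖ ^ 2))
  (hLip2 : ∀ κ x x' b, ‖f κ x b - f κ x' b‖ ≤ L₂ * ‖x - x'‖)
  (hcard : ∀ κ, (nbrFinset E κ).card ≤ N) (hH : IsVolterraIterates L₂ (L₁ * √N) M H) {T : ℝ}
  (hanti : ∀ t ∈ Icc 0 T, AntitoneOn (fun k => H k t) (Ici 1))
  (hRi : IsReferenceSolution E f Di Ai xi χi) (hRl : IsReferenceSolution E f Dl Al xl χl)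
  (hagree : ∀ κ ∈ Di ∩ Dl, xi κ = xl κ) {q : Fin Nv → ℕ}
  (hq_one : ∀ κ ∈ Di ∩ Dl, κ ∉ Ai ∩ Al → q κ = 1) (hq_two : ∀ κ ∈ Ai ∩ Al, 2 ≤ q κ)
  (hq_succ : ∀ κ ∈ Ai ∩ Al, ∀ j, j ≠ κ → E j κ → q κ ≤ q j + 1)
include hL₁ hM hbound hLip1 hLip2 hcard hH hanti hRi hRl hagree hq_one hq_two hq_succ

lemma norm_sub_lt_of_isReferenceSolution {ε : ℝ} (hε : 0 < ε) {t : ℝ} (ht : t ∈ Icc 0 T)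
    {κ : Fin Nv} (hκ : κ ∈ Di ∩ Dl) :
    ‖χi κ t - χl κ t‖ < H (q κ) t + ε * exp ((L₂ + L₁ * √N) * t) := by
  have h0 : ∀ κ ∈ Di ∩ Dl, χi κ 0 = χl κ 0 := fun κ hκ => by
    rw [hRi.apply_zero hκ.1, hRl.apply_zero hκ.2, hagree κ hκ]
  have hq1 : ∀ κ ∈ Di ∩ Dl, 1 ≤ q κ := fun κ hκ => by
    by_cases hA : κ ∈ Ai ∩ Al
    · exact (hq_two κ hA).trans' one_le_two
    · rw [hq_one κ hκ hA]
  refine forall_lt_of_forall_Ico_le_imp_lt (ι := ↥(Di ∩ Dl))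
    (u := fun k s => ‖χi k s - χl k s‖)
    (B := fun k s => H (q k) s + ε * exp ((L₂ + L₁ * √N) * s))
    (fun k => ((hRi.continuousOn k.2.1).sub (hRl.continuousOn k.2.2)).norm.mono Icc_subset_Ici_self)
    (fun k => ((hH.continuous (hq1 k k.2)).add (by fun_prop)).continuousOn)
    ?_ ht ⟨κ, hκ⟩
  rintro T' hT' hbefore ⟨κ, hκ⟩
  by_cases hA : κ ∈ Ai ∩ Al
  · obtain ⟨r, hr, hqκ⟩ : ∃ r, 1 ≤ r ∧ q κ = r + 1 := ⟨q κ - 1, by have := hq_two κ hA; omega⟩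
    simp only [hqκ]
    refine norm_sub_lt_of_forall_nbr_le hL₁ hM hLip1 hLip2 (hcard κ) hH
      (hRi.hasDerivWithinAt κ hA.1) (hRl.hasDerivWithinAt κ hA.2) (h0 κ hκ) hr hε hT'.1
      fun s hs j hj => ?_
    obtain ⟨hjκ, e⟩ := (Finset.mem_filter.1 hj).2
    have hjD : j ∈ Di ∩ Dl := ⟨hRi.mem_of_adj κ hA.1 j hjκ e, hRl.mem_of_adj κ hA.2 j hjκ e⟩
    have hrj : r ≤ q j := by have := hq_succ κ hA j hjκ e; omega
    calc ‖χi j s - χl j s‖ ≤ H (q j) s + ε * exp ((L₂ + L₁ * √N) * s) := hbefore s hs ⟨j, hjD⟩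
      _ ≤ H r s + ε * exp ((L₂ + L₁ * √N) * s) := by
        gcongr
        exact hanti s ⟨hs.1, hs.2.le.trans hT'.2⟩ (mem_Ici.2 hr) (hq1 j hjD) hrj
  · simp only [hq_one κ hκ hA, hH.one]
    have := norm_sub_le_of_notMem_inter hbound hRi hRl hagree hκ hA hT'.1
    have := mul_pos hε (exp_pos ((L₂ + L₁ * √N) * T'))
    linarith

lemma norm_sub_le_of_isReferenceSolution {t : ℝ} (ht : t ∈ Icc 0 T) {κ : Fin Nv}
    (hκ : κ ∈ Di ∩ Dl) : ‖χi κ t - χl κ t‖ ≤ H (q κ) t := by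
  refine le_of_forall_pos_lt_add fun ε hε => ?_
  have := norm_sub_lt_of_isReferenceSolution hL₁ hM hbound hLip1 hLip2 hcard hH hanti hRi hRl
    hagree hq_one hq_two hq_succ (ε := ε / exp ((L₂ + L₁ * √N) * t)) (by positivity) ht hκ
  rwa [div_mul_cancel₀ _ (exp_pos _).ne'] at this

end Comparison

section Level

variable {V : Type*} {E : V → V → Prop}

open Classical in
/-- `sInf {k | κ ∈ nbar E ℓ k}` is the distance from `κ` to `ℓ`. -/
noncomputable def level (E : V → V → Prop) (ℓ : V) (m : ℕ) (P : Set V) (κ : V) : ℕ :=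
  if κ ∈ P then max 2 (m - sInf {k | κ ∈ nbar E ℓ k}) else 1

variable {i ℓ : V} {m : ℕ} {P : Set V}

lemma level_of_notMem {κ : V} (hκ : κ ∉ P) : level E ℓ m P κ = 1 := if_neg hκ

lemma two_le_level {κ : V} (hκ : κ ∈ P) : 2 ≤ level E ℓ m P κ := by
  rw [level, if_pos hκ]
  exact le_max_left _ _

lemma level_le_level_add_one (hℓ : E ℓ i) (hP : nbar E i (m - 1) ∩ nbar E ℓ (m - 1) ⊆ P)
    {κ j : V} (hκ : κ ∈ nbar E ℓ m) (e : E j κ) : level E ℓ m P κ ≤ level E ℓ m P j + 1 := by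
  classical
  set d := sInf {k | κ ∈ nbar E ℓ k}
  have hκd : κ ∈ nbar E ℓ d := Nat.sInf_mem (s := {k | κ ∈ nbar E ℓ k}) ⟨m, hκ⟩
  have hjℓ : j ∈ nbar E ℓ (d + 1) := mem_nbar_succ_of_adj e hκd
  unfold level
  split_ifs with hκP hjP
  · have : sInf {k | j ∈ nbar E ℓ k} ≤ d + 1 := Nat.sInf_le hjℓ
    omega
  · -- `j ∉ P` is only possible at distance at least `m` from `i` or `ℓ`
    have hji : j ∈ nbar E i (d + 2) := mem_nbar_succ_of_adj_center hℓ hjℓ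
    by_contra! hlt
    exact hjP (hP ⟨nbar_mono i (by omega) hji, nbar_mono ℓ (by omega) hjℓ⟩)
  all_goals omega

lemma le_level_self (hℓ : E ℓ i) (hP : nbar E i (m - 1) ∩ nbar E ℓ (m - 1) ⊆ P) (hm : 1 ≤ m) :
    m ≤ level E ℓ m P ℓ := by
  classical
  unfold level
  split_ifs with hℓP
  · have : sInf {k | ℓ ∈ nbar E ℓ k} = 0 := Nat.eq_zero_of_le_zero (Nat.sInf_le (self_mem_nbar ℓ 0))
    omega
  · by_contra! hlt
    have hℓi : ℓ ∈ nbar E i 1 := mem_nbar_succ_of_adj hℓ (self_mem_nbar i 0)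
    exact hℓP (hP ⟨nbar_mono i (by omega) hℓi, self_mem_nbar ℓ _⟩)

end Level

/-- Deviation bound between the reference trajectory of a neighbor `ℓ ∈ N_i`
and its estimate by `i` (Proposition on neighbor reference trajectory
deviation): for consistent cell configurations,
`|χ_ℓ^{[i]}(t) − χ_ℓ^{[ℓ]}(t)| ≤ H_m(t)` for all `t ∈ [0, t*]`, where `t*` is
the unique positive root of `e^{L₂ t} − (L₂ + L₂²/(L₁ √N_max)) t − 1 = 0` and
`H₁(t) = M t`, `H_{κ+1}(t) = ∫_0^t e^{L₂(t−s)} L₁ √N_max H_κ(s) ds`.  The reference solutions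
`χ^{[i]}, χ^{[ℓ]}` are per the Definition of reference trajectories: if
`N_i^{m+1} = ∅` they solve the coupled system on `N̄_i^m`, else they solve it on
`N̄_i^{m−1}` with the agents in `N_i^m` held fixed at their initial points. -/
theorem stmt18 (Nv n : ℕ) (E : Fin Nv → Fin Nv → Prop) [DecidableRel E]
    (f : Fin Nv → EuclideanSpace ℝ (Fin n) → (Fin Nv → EuclideanSpace ℝ (Fin n)) →
      EuclideanSpace ℝ (Fin n))
    (L₁ L₂ M : ℝ) (hL₁ : 0 < L₁) (hL₂ : 0 < L₂) (hM : 0 < M)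
    (hbound : ∀ κ x b, ‖f κ x b‖ ≤ M)
    (hLip1 : ∀ κ x b b', ‖f κ x b - f κ x b'‖ ≤
      L₁ * Real.sqrt (∑ j ∈ nbrFinset E κ, ‖b j - b' j‖ ^ 2))
    (hLip2 : ∀ κ x x' b, ‖f κ x b - f κ x' b‖ ≤ L₂ * ‖x - x'‖)
    (Nmax : ℕ) (hNmax : Nmax = Finset.univ.sup fun κ => (nbrFinset E κ).card)
    (hNmax1 : 1 ≤ Nmax)
    (m : ℕ) (hm : 1 ≤ m)
    (xGi xGl : Fin Nv → EuclideanSpace ℝ (Fin n))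
    (i ℓ : Fin Nv) (hℓ : ℓ ∈ nbr E i)
    (hagree : ∀ κ ∈ nbar E i m ∩ nbar E ℓ m, xGi κ = xGl κ)
    (χi χl : Fin Nv → ℝ → EuclideanSpace ℝ (Fin n))
    (hIVPi :
      (nset E i (m + 1) = ∅ →
        (∀ κ ∈ nbar E i m, χi κ 0 = xGi κ) ∧
        (∀ κ ∈ nbar E i m, ∀ t ∈ Set.Ici (0:ℝ),
          HasDerivWithinAt (χi κ) (f κ (χi κ t) (fun j => χi j t)) (Set.Ici 0) t)) ∧
      (nset E i (m + 1) ≠ ∅ →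
        (∀ κ ∈ nbar E i (m - 1), χi κ 0 = xGi κ) ∧
        (∀ κ ∈ nbar E i (m - 1), ∀ t ∈ Set.Ici (0:ℝ),
          HasDerivWithinAt (χi κ) (f κ (χi κ t) (fun j => χi j t)) (Set.Ici 0) t) ∧
        (∀ κ ∈ nset E i m, ∀ t : ℝ, χi κ t = xGi κ)))
    (hIVPl :
      (nset E ℓ (m + 1) = ∅ →
        (∀ κ ∈ nbar E ℓ m, χl κ 0 = xGl κ) ∧
        (∀ κ ∈ nbar E ℓ m, ∀ t ∈ Set.Ici (0:ℝ),
          HasDerivWithinAt (χl κ) (f κ (χl κ t) (fun j => χl j t)) (Set.Ici 0) t)) ∧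
      (nset E ℓ (m + 1) ≠ ∅ →
        (∀ κ ∈ nbar E ℓ (m - 1), χl κ 0 = xGl κ) ∧
        (∀ κ ∈ nbar E ℓ (m - 1), ∀ t ∈ Set.Ici (0:ℝ),
          HasDerivWithinAt (χl κ) (f κ (χl κ t) (fun j => χl j t)) (Set.Ici 0) t) ∧
        (∀ κ ∈ nset E ℓ m, ∀ t : ℝ, χl κ t = xGl κ)))
    (tstar : ℝ) (htpos : 0 < tstar)
    (hroot : Real.exp (L₂ * tstar)
      - (L₂ + L₂ ^ 2 / (L₁ * Real.sqrt (Nmax : ℝ))) * tstar - 1 = 0)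
    (H : ℕ → ℝ → ℝ)
    (hH1 : ∀ t : ℝ, H 1 t = M * t)
    (hHrec : ∀ κ : ℕ, 1 ≤ κ → ∀ t : ℝ,
      H (κ + 1) t = ∫ s in (0:ℝ)..t,
        Real.exp (L₂ * (t - s)) * (L₁ * Real.sqrt (Nmax : ℝ) * H κ s)) :
    ∀ t ∈ Set.Icc (0:ℝ) tstar, ‖χi ℓ t - χl ℓ t‖ ≤ H m t := by
  obtain ⟨Ai, hAi, hRi⟩ := exists_isReferenceSolution hm hIVPi
  obtain ⟨Al, hAl, hRl⟩ := exists_isReferenceSolution hm hIVPl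
  have hC : 0 < L₁ * √(Nmax : ℝ) := mul_pos hL₁ (sqrt_pos.2 (by exact_mod_cast hNmax1))
  have hroot' : exp (L₂ * tstar) = 1 + (L₂ + L₂ ^ 2 / (L₁ * √(Nmax : ℝ))) * tstar := by
    linarith
  have hH : IsVolterraIterates L₂ (L₁ * √(Nmax : ℝ)) M H := ⟨hH1, hHrec⟩
  have hcard : ∀ κ, (nbrFinset E κ).card ≤ Nmax := fun κ =>
    hNmax ▸ Finset.le_sup (f := fun κ => (nbrFinset E κ).card) (Finset.mem_univ κ)
  have hP : nbar E i (m - 1) ∩ nbar E ℓ (m - 1) ⊆ Ai ∩ Al := inter_subset_inter hAi hAl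
  have hℓD : ℓ ∈ nbar E i m ∩ nbar E ℓ m :=
    ⟨nbar_mono i hm (mem_nbar_succ_of_adj hℓ.2 (self_mem_nbar i 0)), self_mem_nbar ℓ m⟩
  have hmℓ : m ≤ level E ℓ m (Ai ∩ Al) ℓ := le_level_self hℓ.2 hP hm
  intro t ht
  calc ‖χi ℓ t - χl ℓ t‖ ≤ H (level E ℓ m (Ai ∩ Al) ℓ) t :=
        norm_sub_le_of_isReferenceSolution hL₁.le hM.le hbound hLip1 hLip2 hcard hH
          (fun t ht => hH.antitoneOn hL₂ hC hM.le htpos hroot' ht) hRi hRl hagree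
          (fun κ _ => level_of_notMem) (fun κ => two_le_level)
          (fun κ hκ j _ e => level_le_level_add_one hℓ.2 hP (hRl.subset hκ.2) e) ht hℓD
    _ ≤ H m t := hH.antitoneOn hL₂ hC hM.le htpos hroot' ht hm (hm.trans hmℓ) hmℓ
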